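/- arXiv:2605.09831 — 2 statements merged into one kernel-verified Lean document; each statement's English description precedes it below -/
import Mathlib

section
/- Suppose a < q < b in [0,1] satisfy: ūB(y) > ūA(y) for all y ∈ (a, q); ūA(y) > ūB(y) for all y ∈ (q, b); either a = 0 and ūB(0) > ūA(0), or there is a₀ < a with ūA > ūB on (a₀, a); and either b = 1 and ūA(1) > ūB(1), or there is b₀ > b with ūB > ūA on (b, b₀). Then every Carathéodory solution x of the continuous-time imitation population dynamics with x(0) in the interior of 𝒳_s and σ(x(0)) = q converges, as t → ∞, to one of the three points aρ, qρ, bρ. -/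
open scoped Classical
open MeasureTheory Filter Set

/-- The state space `ℝ^p`, with the Euclidean norm. -/
abbrev Vec (p : ℕ) := EuclideanSpace ℝ (Fin p)

/-- Maximum of finitely many polynomial utilities at `y`. -/
noncomputable def ubar {p : ℕ} (u : Fin p → Polynomial ℝ) (y : ℝ) : ℝ :=
  ⨆ i, (u i).eval y

/-- The total proportion of `A`-players: `σ(x) = Σ_i x_i`. -/
noncomputable def sigma' {p : ℕ} (x : Vec p) : ℝ := ∑ i, x i

/-- The state space `𝒳_s = ∏_i [0, ρ_i]`. -/
def Xs {p : ℕ} (ρ : Vec p) : Set (Vec p) := {x | ∀ i, x i ∈ Set.Icc 0 (ρ i)}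

/-- The set-valued map of the continuous-time imitation population dynamics. -/
noncomputable def Vmap {p : ℕ} (ρ : Vec p) (uA uB : Fin p → Polynomial ℝ)
    (x : Vec p) : Set (Vec p) :=
  if x ∈ interior (Xs ρ) ∧ ubar uB (sigma' x) < ubar uA (sigma' x) then {ρ - x}
  else if x ∈ interior (Xs ρ) ∧ ubar uA (sigma' x) < ubar uB (sigma' x) then {-x}
  else segment ℝ (ρ - x) (-x)

/-- A Carathéodory solution of the continuous-time imitation population dynamics on `[0,∞)`:
a locally absolutely continuous `𝒳_s`-valued function whose derivative lies in `Vmap`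
almost everywhere, expressed in integral form. -/
def IsPopSol {p : ℕ} (ρ : Vec p) (uA uB : Fin p → Polynomial ℝ) (x : ℝ → Vec p) : Prop :=
  (∀ t, 0 ≤ t → x t ∈ Xs ρ) ∧
  ∃ v : ℝ → Vec p,
    (∀ᵐ t ∂(MeasureTheory.volume.restrict (Set.Ici (0:ℝ))), v t ∈ Vmap ρ uA uB (x t)) ∧
    (∀ t, 0 ≤ t → IntervalIntegrable v MeasureTheory.volume 0 t) ∧
    (∀ t, 0 ≤ t → x t = x 0 + ∫ s in (0:ℝ)..t, v s)

/-!
Every admissible velocity is `θ • ρ - x` with `θ ∈ [0, 1]`. Hence the deviation `x - σ(x) • ρ`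
from the ray `ℝ ρ` solves `y' = -y` and dies out like `exp (-t)`, while each coordinate `x i` and
each gap `ρ i - x i` decays at most like `exp (-t)`, so the state stays in the interior. There the
sign of `ūA - ūB` at the level `S = σ(x)` forces `S' = 1 - S` (upward drift) or `S' = -S`
(downward drift). If `S` ever exceeds `q`, it is pushed up through `(q, b)` and trapped at `b`,
either by `S ≤ 1` or by the downward drift just above `b`; symmetrically, if it ever drops below
`q` it converges to `a`; otherwise it stays at `q`. So `x` converges to `a • ρ`, `q • ρ` or `b • ρ`.
-/

open scoped Topology
open intervalIntegral

def IsAntiderivOnIci {E : Type*} [NormedAddCommGroup E] [NormedSpace ℝ E] (f w : ℝ → E) :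
    Prop :=
  (∀ t, 0 ≤ t → IntervalIntegrable w volume 0 t) ∧
    ∀ t, 0 ≤ t → f t = f 0 + ∫ s in (0:ℝ)..t, w s

namespace IsAntiderivOnIci

section NormedSpace

variable {E : Type*} [NormedAddCommGroup E] [NormedSpace ℝ E] {f w : ℝ → E}

theorem map [CompleteSpace E] {F : Type*} [NormedAddCommGroup F] [NormedSpace ℝ F]
    [CompleteSpace F] (h : IsAntiderivOnIci f w) (L : E →L[ℝ] F) :
    IsAntiderivOnIci (fun t => L (f t)) (fun t => L (w t)) :=
  ⟨fun t ht => ⟨L.integrable_comp (h.1 t ht).1, L.integrable_comp (h.1 t ht).2⟩, fun t ht => by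
    dsimp only
    rw [h.2 t ht, map_add, L.intervalIntegral_comp_comm (h.1 t ht)]⟩

theorem const_sub (h : IsAntiderivOnIci f w) (c : E) :
    IsAntiderivOnIci (fun t => c - f t) (fun t => -w t) :=
  ⟨fun t ht => (h.1 t ht).neg, fun t ht => by
    simp only [h.2 t ht, intervalIntegral.integral_neg]; abel⟩

theorem intervalIntegrable {t₁ t₂ : ℝ} (h : IsAntiderivOnIci f w) (h₁ : 0 ≤ t₁) (h₂ : 0 ≤ t₂) :
    IntervalIntegrable w volume t₁ t₂ :=
  (h.1 t₁ h₁).symm.trans (h.1 t₂ h₂)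

theorem sub_eq_integral {t₁ t₂ : ℝ} (h : IsAntiderivOnIci f w) (h₁ : 0 ≤ t₁) (h₂ : 0 ≤ t₂) :
    f t₂ - f t₁ = ∫ s in t₁..t₂, w s := by
  rw [h.2 t₁ h₁, h.2 t₂ h₂, ← integral_interval_sub_left (h.1 t₂ h₂) (h.1 t₁ h₁)]
  abel

theorem continuousOn (h : IsAntiderivOnIci f w) : ContinuousOn f (Ici 0) := by
  intro t ht
  have ht1 : (0:ℝ) ≤ t + 1 := by linarith [mem_Ici.1 ht]
  have hIcc : ContinuousOn f (Icc 0 (t + 1)) := by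
    have := continuousOn_primitive_interval' (h.1 _ ht1) left_mem_uIcc
    rw [uIcc_of_le ht1] at this
    exact (continuousOn_const.add this).congr fun s hs => h.2 s hs.1
  exact (hIcc t ⟨ht, by linarith⟩).mono_of_mem_nhdsWithin <|
    mem_nhdsWithin.2 ⟨Iio (t + 1), isOpen_Iio, by simp, fun y hy => ⟨hy.2, hy.1.le⟩⟩

end NormedSpace

theorem exp_neg_mul_le {f w : ℝ → ℝ} (h : IsAntiderivOnIci f w)
    (hw : ∀ᵐ s, 0 ≤ s → -f s ≤ w s) {t : ℝ} (ht : 0 ≤ t) :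
    Real.exp (-t) * f 0 ≤ f t := by
  set F : ℝ → ℝ := fun s => f 0 + ∫ τ in (0:ℝ)..s, w τ
  have hfF : ∀ s, 0 ≤ s → f s = F s := h.2
  have hF : AbsolutelyContinuousOnInterval F 0 t :=
    contDiffOn_const.absolutelyContinuousOnInterval.add
      ((h.1 t ht).absolutelyContinuousOnInterval_intervalIntegral left_mem_uIcc)
  have hG : AbsolutelyContinuousOnInterval (fun s => Real.exp s * F s) 0 t :=
    Real.contDiff_exp.contDiffOn.absolutelyContinuousOnInterval.mul hF
  have hderiv : ∀ᵐ s ∂volume.restrict (Icc 0 t), 0 ≤ deriv (fun s => Real.exp s * F s) s := by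
    rw [ae_restrict_iff' measurableSet_Icc]
    filter_upwards [(h.1 t ht).ae_hasDerivAt_integral, hw] with s hFs hws hs
    have hs' : s ∈ uIcc 0 t := by rwa [uIcc_of_le ht]
    have hGs : HasDerivAt (fun s => Real.exp s * F s)
        (Real.exp s * F s + Real.exp s * w s) s :=
      (Real.hasDerivAt_exp s).mul ((hFs hs' 0 left_mem_uIcc).const_add (f 0))
    rw [hGs.deriv, ← mul_add, ← hfF s hs.1]
    exact mul_nonneg (Real.exp_pos s).le (by linarith [hws hs.1])
  have hmono : F 0 ≤ Real.exp t * F t := by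
    have := integral_nonneg_of_ae_restrict ht hderiv
    rw [hG.integral_deriv_eq_sub, Real.exp_zero, one_mul] at this
    linarith
  rw [← hfF t ht, ← hfF 0 le_rfl] at hmono
  rw [Real.exp_neg, inv_mul_le_iff₀ (Real.exp_pos t)]
  exact hmono

theorem eq_exp_neg_mul {f w : ℝ → ℝ} (h : IsAntiderivOnIci f w)
    (hw : ∀ᵐ s, 0 ≤ s → w s = -f s) {t : ℝ} (ht : 0 ≤ t) :
    f t = Real.exp (-t) * f 0 := by
  have hlow := h.exp_neg_mul_le (hw.mono fun s hs h0 => (hs h0).ge) ht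
  have hupp := (h.const_sub 0).exp_neg_mul_le
    (hw.mono fun s hs h0 => by rw [hs h0]; simp) ht
  simp only [zero_sub, mul_neg, neg_le_neg_iff] at hupp
  exact le_antisymm hupp hlow

theorem eq_exp_neg_smul {E : Type*} [NormedAddCommGroup E] [NormedSpace ℝ E] [CompleteSpace E]
    {f w : ℝ → E} (h : IsAntiderivOnIci f w) (hw : ∀ᵐ s, 0 ≤ s → w s = -f s) {t : ℝ}
    (ht : 0 ≤ t) : f t = Real.exp (-t) • f 0 := by
  rw [SeparatingDual.eq_iff_forall_dual_eq (R := ℝ)]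
  intro φ
  rw [map_smul, smul_eq_mul]
  exact (h.map φ).eq_exp_neg_mul (hw.mono fun s hs h0 => by rw [hs h0, map_neg]) ht

end IsAntiderivOnIci

def DriftsUpOn (S g : ℝ → ℝ) (α β : ℝ) : Prop :=
  ∀ᵐ t, 0 ≤ t → S t ∈ Ioo α β → g t = 1 - S t

def DriftsDownOn (S g : ℝ → ℝ) (α β : ℝ) : Prop :=
  ∀ᵐ t, 0 ≤ t → S t ∈ Ioo α β → g t = -S t

section Drift

variable {S g : ℝ → ℝ} {α β : ℝ}

theorem DriftsUpOn.one_sub (h : DriftsUpOn S g α β) :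
    DriftsDownOn (fun t => 1 - S t) (fun t => -g t) (1 - β) (1 - α) :=
  h.mono fun t ht h0 hS => by
    simp only [mem_Ioo] at hS
    simp only [ht h0 ⟨by linarith, by linarith⟩]

theorem DriftsDownOn.one_sub (h : DriftsDownOn S g α β) :
    DriftsUpOn (fun t => 1 - S t) (fun t => -g t) (1 - β) (1 - α) :=
  h.mono fun t ht h0 hS => by
    simp only [mem_Ioo] at hS
    simp only [ht h0 ⟨by linarith, by linarith⟩]; ring

namespace IsAntiderivOnIci

theorem eventually_nhdsGT_le_of_driftsUpOn (h : IsAntiderivOnIci S g)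
    (hup : DriftsUpOn S g α β) (hβ : β ≤ 1) {x : ℝ} (hx : 0 ≤ x) (hSx : S x ∈ Ioo α β) :
    ∀ᶠ y in 𝓝[>] x, S x ≤ S y := by
  have hcont : ContinuousWithinAt S (Ici x) x := (h.continuousOn x hx).mono (Ici_subset_Ici.2 hx)
  obtain ⟨u, hxu, hu⟩ := mem_nhdsGE_iff_exists_Ico_subset.1 (hcont (isOpen_Ioo.mem_nhds hSx))
  filter_upwards [Ioo_mem_nhdsGT hxu] with y hy
  rw [← sub_nonneg, h.sub_eq_integral hx (hx.trans hy.1.le)]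
  refine integral_nonneg_of_ae_restrict hy.1.le ?_
  rw [EventuallyLE, ae_restrict_iff' measurableSet_Icc]
  filter_upwards [hup] with τ hτ hτI
  have hS : S τ ∈ Ioo α β := hu ⟨hτI.1, hτI.2.trans_lt hy.2⟩
  rw [Pi.zero_apply, hτ (hx.trans hτI.1) hS]
  linarith [hS.2]

theorem le_of_driftsUpOn (h : IsAntiderivOnIci S g) (hup : DriftsUpOn S g α β) (hβ : β ≤ 1)
    {c : ℝ} (hc : c ∈ Ioo α β) {t₁ : ℝ} (ht₁ : 0 ≤ t₁) (hct₁ : c ≤ S t₁) {t : ℝ} (ht : t₁ ≤ t) :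
    c ≤ S t := by
  have hsub : Icc t₁ t ⊆ S ⁻¹' Ici c := by
    refine IsClosed.Icc_subset_of_forall_mem_nhdsWithin ?_ hct₁ ?_
    · rw [inter_comm]
      exact (h.continuousOn.mono fun τ hτ => ht₁.trans hτ.1).preimage_isClosed_of_isClosed
        isClosed_Icc isClosed_Ici
    · rintro x ⟨hcx, hx⟩
      have hx0 : 0 ≤ x := ht₁.trans hx.1
      rcases (show c ≤ S x from hcx).lt_or_eq with hlt | rfl
      · have hcont : ContinuousWithinAt S (Ioi x) x :=
          (h.continuousOn x hx0).mono (Ioi_subset_Ici_self.trans (Ici_subset_Ici.2 hx0))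
        exact mem_of_superset (hcont (Ioi_mem_nhds hlt)) fun y (hy : c < S y) => hy.le
      · exact h.eventually_nhdsGT_le_of_driftsUpOn hup hβ hx0 hc
  exact hsub ⟨ht, le_rfl⟩

theorem eventually_atTop_le_of_driftsUpOn (h : IsAntiderivOnIci S g) (hup : DriftsUpOn S g α β)
    (hβ : β ≤ 1) (hS1 : ∀ t, 0 ≤ t → S t ≤ 1) {t₁ : ℝ} (ht₁ : 0 ≤ t₁) (hSt₁ : S t₁ ∈ Ioo α β)
    {c : ℝ} (hc : c ∈ Ioo α β) : ∀ᶠ t in atTop, c ≤ S t := by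
  suffices ∃ t₂, t₁ ≤ t₂ ∧ c ≤ S t₂ by
    obtain ⟨t₂, ht₁₂, hct₂⟩ := this
    exact eventually_atTop.2 ⟨t₂, fun t ht => h.le_of_driftsUpOn hup hβ hc (ht₁.trans ht₁₂) hct₂ ht⟩
  by_contra! hlt
  have hc1 : 0 < 1 - c := by linarith [hc.2]
  set T := t₁ + (2 - S t₁) / (1 - c)
  have hT : t₁ ≤ T := le_add_of_nonneg_right (div_nonneg (by linarith [hSt₁.2]) hc1.le)
  -- on `[t₁, T]` the level stays in `[S t₁, c)`, where `g = 1 - S ≥ 1 - c`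
  have hgrow : ∫ _ in t₁..T, (1 - c) ≤ S T - S t₁ := by
    rw [h.sub_eq_integral ht₁ (ht₁.trans hT)]
    refine integral_mono_ae_restrict hT intervalIntegrable_const
      (h.intervalIntegrable ht₁ (ht₁.trans hT)) ?_
    rw [EventuallyLE, ae_restrict_iff' measurableSet_Icc]
    filter_upwards [hup] with τ hτ hτI
    have hlow := h.le_of_driftsUpOn hup hβ hSt₁ ht₁ le_rfl hτI.1
    rw [hτ (ht₁.trans hτI.1) ⟨hSt₁.1.trans_le hlow, (hlt τ hτI.1).trans hc.2⟩]
    linarith [hlt τ hτI.1]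
  rw [intervalIntegral.integral_const, smul_eq_mul, add_sub_cancel_left,
    div_mul_cancel₀ _ hc1.ne'] at hgrow
  linarith [hS1 T (ht₁.trans hT)]

theorem tendsto_of_driftsUpOn (h : IsAntiderivOnIci S g) (hS : ∀ t, 0 ≤ t → S t ∈ Icc 0 1)
    {q b : ℝ} (hqb : q < b) (hb : b ≤ 1) (hR : DriftsUpOn S g q b)
    (hB : b = 1 ∨ ∃ b₀ > b, DriftsDownOn S g b b₀) (hS0 : S 0 ≤ q) {t₀ : ℝ} (ht₀ : 0 ≤ t₀)
    (hqt₀ : q < S t₀) : Tendsto S atTop (𝓝 b) := by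
  obtain ⟨t₁, ht₁, hSt₁⟩ : ∃ t₁, 0 ≤ t₁ ∧ S t₁ ∈ Ioo q b := by
    rcases lt_or_ge (S t₀) b with hlt | hge
    · exact ⟨t₀, ht₀, hqt₀, hlt⟩
    · obtain ⟨t₁, ht₁, hSt₁⟩ := intermediate_value_Icc ht₀
        (h.continuousOn.mono Icc_subset_Ici_self)
        (⟨by linarith, by linarith⟩ : (q + b) / 2 ∈ Icc (S 0) (S t₀))
      exact ⟨t₁, ht₁.1, by rw [hSt₁]; constructor <;> linarith⟩
  rw [tendsto_order]
  refine ⟨fun c hc => ?_, fun c hc => ?_⟩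
  · obtain ⟨c', hcc', hc'b⟩ := exists_between (max_lt hc hqb)
    filter_upwards [h.eventually_atTop_le_of_driftsUpOn hR hb (fun t ht => (hS t ht).2) ht₁ hSt₁
      ⟨(le_max_right c q).trans_lt hcc', hc'b⟩] with t ht
    exact ((le_max_left c q).trans_lt hcc').trans_le ht
  · rcases hB with rfl | ⟨b₀, hbb₀, hdown⟩
    · filter_upwards [eventually_ge_atTop 0] with t ht
      exact (hS t ht).2.trans_lt hc
    · obtain ⟨ℓ, hbℓ, hℓ⟩ := exists_between (lt_min hc hbb₀)
      have hb0 : 0 ≤ b := by linarith [(hS 0 le_rfl).1]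
      filter_upwards [eventually_ge_atTop t₁] with t ht
      have := (h.const_sub 1).le_of_driftsUpOn hdown.one_sub (by linarith)
        (c := 1 - ℓ) ⟨by linarith [min_le_right c b₀], by linarith⟩ ht₁
        (by linarith [hSt₁.2]) ht
      linarith [min_le_left c b₀]

theorem tendsto_of_driftsDownOn_of_driftsUpOn (h : IsAntiderivOnIci S g)
    (hS : ∀ t, 0 ≤ t → S t ∈ Icc 0 1) {a q b : ℝ} (hS0 : S 0 = q) (ha : 0 ≤ a) (hb : b ≤ 1)
    (haq : a < q) (hqb : q < b) (hL : DriftsDownOn S g a q) (hR : DriftsUpOn S g q b)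
    (hA : a = 0 ∨ ∃ a₀ < a, DriftsUpOn S g a₀ a)
    (hB : b = 1 ∨ ∃ b₀ > b, DriftsDownOn S g b b₀) :
    Tendsto S atTop (𝓝 a) ∨ Tendsto S atTop (𝓝 q) ∨ Tendsto S atTop (𝓝 b) := by
  by_cases hup : ∃ t, 0 ≤ t ∧ q < S t
  · obtain ⟨t₀, ht₀, hqt₀⟩ := hup
    exact Or.inr (Or.inr (h.tendsto_of_driftsUpOn hS hqb hb hR hB hS0.le ht₀ hqt₀))
  by_cases hdown : ∃ t, 0 ≤ t ∧ S t < q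
  · obtain ⟨t₀, ht₀, hqt₀⟩ := hdown
    -- the mirror image `S ↦ 1 - S` exchanges the roles of `a` and `b`
    have := (h.const_sub 1).tendsto_of_driftsUpOn (q := 1 - q) (b := 1 - a)
      (fun t ht => ⟨by linarith [(hS t ht).2], by linarith [(hS t ht).1]⟩) (by linarith)
      (by linarith) hL.one_sub
      (hA.imp (fun ha0 => by rw [ha0, sub_zero])
        fun ⟨a₀, ha₀, hup⟩ => ⟨1 - a₀, by linarith, hup.one_sub⟩)
      (by rw [hS0]) ht₀ (by linarith)
    left
    simpa using (tendsto_const_nhds (x := (1:ℝ))).sub this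
  push Not at hup hdown
  refine Or.inr (Or.inl (tendsto_const_nhds.congr' ?_))
  filter_upwards [eventually_ge_atTop 0] with t ht
  exact (le_antisymm (hup t ht) (hdown t ht)).symm

end IsAntiderivOnIci

end Drift

section Population

variable {p : ℕ}

noncomputable def sigmaCLM (p : ℕ) : Vec p →L[ℝ] ℝ where
  toFun := sigma'
  map_add' x y := by simp [sigma', Finset.sum_add_distrib]
  map_smul' c x := by simp [sigma', Finset.mul_sum]
  cont := continuous_finsetSum _ fun i _ => (EuclideanSpace.proj i).continuous

theorem sigmaCLM_apply (x : Vec p) : sigmaCLM p x = sigma' x := rfl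

noncomputable def deviationCLM (ρ : Vec p) : Vec p →L[ℝ] Vec p :=
  ContinuousLinearMap.id ℝ (Vec p) - (sigmaCLM p).smulRight ρ

theorem deviationCLM_apply (ρ x : Vec p) : deviationCLM ρ x = x - sigma' x • ρ := rfl

theorem interior_Xs (ρ : Vec p) : interior (Xs ρ) = {x | ∀ i, x i ∈ Ioo 0 (ρ i)} := by
  have : Xs ρ = PiLp.homeomorph 2 (fun _ : Fin p => ℝ) ⁻¹' univ.pi fun i => Icc 0 (ρ i) := by
    ext x; simp only [mem_preimage, mem_univ_pi]; rfl
  rw [this, ← Homeomorph.preimage_interior, interior_pi_set finite_univ]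
  ext x; simp only [interior_Icc, mem_preimage, mem_univ_pi]; rfl

theorem sigma'_mem_Icc {ρ x : Vec p} (hρ : sigma' ρ = 1) (hx : x ∈ Xs ρ) : sigma' x ∈ Icc 0 1 :=
  ⟨Finset.sum_nonneg fun i _ => (hx i).1, hρ ▸ Finset.sum_le_sum fun i _ => (hx i).2⟩

theorem segment_sub_neg_eq_image (ρ x : Vec p) :
    segment ℝ (ρ - x) (-x) = (fun θ : ℝ => θ • ρ - x) '' Icc 0 1 := by
  rw [segment_symm, segment_eq_image']
  congr 1
  ext1 θ
  module

theorem deviationCLM_eq_neg_of_mem_segment {ρ x v : Vec p} (hρ : sigma' ρ = 1)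
    (hv : v ∈ segment ℝ (ρ - x) (-x)) : deviationCLM ρ v = -deviationCLM ρ x := by
  obtain ⟨θ, -, rfl⟩ := (segment_sub_neg_eq_image ρ x).subset hv
  simp only [deviationCLM_apply, ← sigmaCLM_apply, map_sub, map_smul]
  rw [sigmaCLM_apply ρ, hρ]
  module

theorem apply_mem_Icc_of_mem_segment {ρ x v : Vec p} (hv : v ∈ segment ℝ (ρ - x) (-x))
    {i : Fin p} (hρ : 0 ≤ ρ i) : v i ∈ Icc (-x i) (ρ i - x i) := by
  obtain ⟨θ, hθ, rfl⟩ := (segment_sub_neg_eq_image ρ x).subset hv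
  simp only [PiLp.sub_apply, PiLp.smul_apply, smul_eq_mul]
  constructor <;> nlinarith [hθ.1, hθ.2]

section Vmap

variable {ρ x : Vec p} {uA uB : Fin p → Polynomial ℝ}

theorem Vmap_subset_segment : Vmap ρ uA uB x ⊆ segment ℝ (ρ - x) (-x) := by
  unfold Vmap
  split_ifs
  · exact singleton_subset_iff.2 (left_mem_segment ℝ _ _)
  · exact singleton_subset_iff.2 (right_mem_segment ℝ _ _)
  · exact subset_rfl

theorem Vmap_eq_sub_of_lt (hx : x ∈ interior (Xs ρ))
    (h : ubar uB (sigma' x) < ubar uA (sigma' x)) : Vmap ρ uA uB x = {ρ - x} :=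
  if_pos ⟨hx, h⟩

theorem Vmap_eq_neg_of_lt (hx : x ∈ interior (Xs ρ))
    (h : ubar uA (sigma' x) < ubar uB (sigma' x)) : Vmap ρ uA uB x = {-x} := by
  rw [Vmap, if_neg fun h' => h'.2.asymm h, if_pos ⟨hx, h⟩]

end Vmap

variable {ρ : Vec p} {x v : ℝ → Vec p}

theorem IsAntiderivOnIci.mem_interior_Xs (hx : IsAntiderivOnIci x v)
    (hseg : ∀ᵐ t, 0 ≤ t → v t ∈ segment ℝ (ρ - x t) (-x t)) (hx0 : x 0 ∈ interior (Xs ρ))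
    {t : ℝ} (ht : 0 ≤ t) : x t ∈ interior (Xs ρ) := by
  rw [interior_Xs] at hx0 ⊢
  intro i
  have hρi : 0 ≤ ρ i := ((hx0 i).1.trans (hx0 i).2).le
  have hbounds := hseg.mono fun s hs h0 => apply_mem_Icc_of_mem_segment (hs h0) hρi
  have hxi : IsAntiderivOnIci (fun t => x t i) (fun t => v t i) :=
    hx.map (EuclideanSpace.proj i)
  have hlow := hxi.exp_neg_mul_le (hbounds.mono fun s hs h0 => (hs h0).1) ht
  have hupp := (hxi.const_sub (ρ i)).exp_neg_mul_le
    (hbounds.mono fun s hs h0 => neg_le_neg (hs h0).2) ht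
  have hexp := Real.exp_pos (-t)
  constructor
  · nlinarith [(hx0 i).1]
  · nlinarith [(hx0 i).2]

variable {uA uB : Fin p → Polynomial ℝ}

theorem driftsUpOn_sigma' (hρ : sigma' ρ = 1)
    (hv : ∀ᵐ t, 0 ≤ t → v t ∈ Vmap ρ uA uB (x t))
    (hint : ∀ t, 0 ≤ t → x t ∈ interior (Xs ρ)) {α β : ℝ}
    (hAB : ∀ y ∈ Ioo α β, ubar uB y < ubar uA y) :
    DriftsUpOn (fun t => sigma' (x t)) (fun t => sigma' (v t)) α β :=
  hv.mono fun t hvt h0 hS => by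
    have hvt := hvt h0
    rw [Vmap_eq_sub_of_lt (hint t h0) (hAB _ hS), mem_singleton_iff] at hvt
    show sigma' (v t) = 1 - sigma' (x t)
    rw [hvt, ← sigmaCLM_apply, map_sub, sigmaCLM_apply, hρ, sigmaCLM_apply]

theorem driftsDownOn_sigma' (hv : ∀ᵐ t, 0 ≤ t → v t ∈ Vmap ρ uA uB (x t))
    (hint : ∀ t, 0 ≤ t → x t ∈ interior (Xs ρ)) {α β : ℝ}
    (hBA : ∀ y ∈ Ioo α β, ubar uA y < ubar uB y) :
    DriftsDownOn (fun t => sigma' (x t)) (fun t => sigma' (v t)) α β :=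
  hv.mono fun t hvt h0 hS => by
    have hvt := hvt h0
    rw [Vmap_eq_neg_of_lt (hint t h0) (hBA _ hS), mem_singleton_iff] at hvt
    show sigma' (v t) = -sigma' (x t)
    rw [hvt, ← sigmaCLM_apply, map_neg, sigmaCLM_apply]

theorem tendsto_smul_of_deviationCLM {c : ℝ} {d : Vec p}
    (hS : Tendsto (fun t => sigma' (x t)) atTop (𝓝 c))
    (hdev : ∀ t, 0 ≤ t → deviationCLM ρ (x t) = Real.exp (-t) • d) :
    Tendsto x atTop (𝓝 (c • ρ)) := by
  have := (hS.smul_const ρ).add (Real.tendsto_exp_neg_atTop_nhds_zero.smul_const d)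
  rw [zero_smul, add_zero] at this
  refine this.congr' ?_
  filter_upwards [eventually_ge_atTop 0] with t ht
  rw [← hdev t ht, deviationCLM_apply]
  abel

end Population

theorem population_convergence_from_nonattracting_level_general
    {p : ℕ} (ρ : Vec p) (hsum : ∑ i, ρ i = 1)
    (uA uB : Fin p → Polynomial ℝ)
    (a q b : ℝ) (ha : 0 ≤ a) (hb : b ≤ 1) (haq : a < q) (hqb : q < b)
    (hleft : ∀ y ∈ Set.Ioo a q, ubar uA y < ubar uB y)
    (hright : ∀ y ∈ Set.Ioo q b, ubar uB y < ubar uA y)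
    (hA : (a = 0 ∧ ubar uA 0 < ubar uB 0) ∨
      ∃ a₀ < a, ∀ y ∈ Set.Ioo a₀ a, ubar uB y < ubar uA y)
    (hB : (b = 1 ∧ ubar uB 1 < ubar uA 1) ∨
      ∃ b₀ > b, ∀ y ∈ Set.Ioo b b₀, ubar uA y < ubar uB y) :
    ∀ x : ℝ → Vec p, IsPopSol ρ uA uB x → x 0 ∈ interior (Xs ρ) →
      sigma' (x 0) = q →
      Filter.Tendsto x Filter.atTop (nhds (a • ρ)) ∨
      Filter.Tendsto x Filter.atTop (nhds (q • ρ)) ∨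
      Filter.Tendsto x Filter.atTop (nhds (b • ρ)) := by
  rintro x ⟨hXs, v, hv, hvint, hxeq⟩ hx0 hq
  have hx : IsAntiderivOnIci x v := ⟨hvint, hxeq⟩
  replace hv : ∀ᵐ t, 0 ≤ t → v t ∈ Vmap ρ uA uB (x t) := (ae_restrict_iff' measurableSet_Ici).1 hv
  have hseg := hv.mono fun t hvt h0 => Vmap_subset_segment (hvt h0)
  have hint := fun t (ht : 0 ≤ t) => hx.mem_interior_Xs hseg hx0 ht
  have hS := (hx.map (sigmaCLM p)).tendsto_of_driftsDownOn_of_driftsUpOn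
    (fun t ht => sigma'_mem_Icc hsum (hXs t ht)) hq ha hb haq hqb
    (driftsDownOn_sigma' hv hint hleft) (driftsUpOn_sigma' hsum hv hint hright)
    (hA.imp And.left fun ⟨a₀, ha₀, hAB⟩ => ⟨a₀, ha₀, driftsUpOn_sigma' hsum hv hint hAB⟩)
    (hB.imp And.left fun ⟨b₀, hb₀, hBA⟩ => ⟨b₀, hb₀, driftsDownOn_sigma' hv hint hBA⟩)
  have hdev := fun t (ht : 0 ≤ t) => (hx.map (deviationCLM ρ)).eq_exp_neg_smul
    (hseg.mono fun s hs h0 => deviationCLM_eq_neg_of_mem_segment hsum (hs h0)) ht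
  exact hS.imp (tendsto_smul_of_deviationCLM · hdev)
    (Or.imp (tendsto_smul_of_deviationCLM · hdev) (tendsto_smul_of_deviationCLM · hdev))

theorem population_convergence_from_nonattracting_level
    {p : ℕ} (hp : 0 < p) (ρ : Vec p) (hρ : ∀ i, 0 < ρ i) (hsum : ∑ i, ρ i = 1)
    (uA uB : Fin p → Polynomial ℝ)
    (a q b : ℝ) (ha : 0 ≤ a) (hb : b ≤ 1) (haq : a < q) (hqb : q < b)
    (hleft : ∀ y ∈ Set.Ioo a q, ubar uA y < ubar uB y)
    (hright : ∀ y ∈ Set.Ioo q b, ubar uB y < ubar uA y)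
    (hA : (a = 0 ∧ ubar uA 0 < ubar uB 0) ∨
      ∃ a₀ < a, ∀ y ∈ Set.Ioo a₀ a, ubar uB y < ubar uA y)
    (hB : (b = 1 ∧ ubar uB 1 < ubar uA 1) ∨
      ∃ b₀ > b, ∀ y ∈ Set.Ioo b b₀, ubar uA y < ubar uB y) :
    ∀ x : ℝ → Vec p, IsPopSol ρ uA uB x → x 0 ∈ interior (Xs ρ) →
      sigma' (x 0) = q →
      Filter.Tendsto x Filter.atTop (nhds (a • ρ)) ∨
      Filter.Tendsto x Filter.atTop (nhds (q • ρ)) ∨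
      Filter.Tendsto x Filter.atTop (nhds (b • ρ)) :=
  population_convergence_from_nonattracting_level_general ρ hsum uA uB a q b ha hb haq hqb hleft
    hright hA hB
end

section
/- For every x ∈ 𝒳_s, the set 𝒱(x) is nonempty, convex, and contained in the closed ball of radius 2 about the origin; moreover the graph {(x, y) ∈ ℝ^p × ℝ^p : x ∈ 𝒳_s and y ∈ 𝒱(x)} is a closed subset of ℝ^p × ℝ^p. In particular, the continuous-time imitation population dynamics form a good upper semicontinuous differential inclusion. -/
open scoped Classical
open MeasureTheory Filter Set

/-!
Every value of `Vmap ρ uA uB x` lies on the segment `[ρ - x, -x]`; for `x ∈ 𝒳_s` both `x` and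
`ρ - x` are nonnegative vectors with coordinate sum at most `1`, so this segment lies in the
unit ball. Since `y ∈ [ρ - x, -x]` iff `x + y ∈ [ρ, 0]`, the segment-valued map has a closed
graph, and the graph of `Vmap` is cut out of it by the conditions `y = ρ - x` and `y = -x` on the
two open regions where one of the maximal utilities strictly dominates the other; a condition
"`x ∈ U → y = g x`" with `U` open and `g` continuous defines a closed set.
-/

lemma mem_segment_sub_neg_iff {E : Type*} [AddCommGroup E] [Module ℝ E] (a x y : E) :
    y ∈ segment ℝ (a - x) (-x) ↔ x + y ∈ segment ℝ a 0 := by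
  rw [← mem_segment_translate ℝ x, add_sub_cancel, add_neg_cancel]

lemma isCompact_segment {E : Type*} [AddCommGroup E] [Module ℝ E] [TopologicalSpace E]
    [IsTopologicalAddGroup E] [ContinuousSMul ℝ E] (a b : E) : IsCompact (segment ℝ a b) := by
  rw [← convexHull_pair (𝕜 := ℝ)]
  exact (toFinite _).isCompact_convexHull ℝ

lemma isClosed_setOf_mem_imp_eq {X Y : Type*} [TopologicalSpace X] [TopologicalSpace Y]
    [T2Space Y] {U : Set X} (hU : IsOpen U) {g : X → Y} (hg : Continuous g) :
    IsClosed {xy : X × Y | xy.1 ∈ U → xy.2 = g xy.1} := by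
  simp only [imp_iff_not_or, ofPred_or]
  exact (hU.isClosed_compl.preimage continuous_fst).union
    (isClosed_eq continuous_snd (hg.comp continuous_fst))

lemma norm_le_sigma' {p : ℕ} {x : Vec p} (hx : ∀ i, 0 ≤ x i) : ‖x‖ ≤ sigma' x := by
  have hσ : 0 ≤ sigma' x := Finset.sum_nonneg fun i _ => hx i
  refine (pow_le_pow_iff_left₀ (norm_nonneg x) hσ two_ne_zero).1 ?_
  rw [EuclideanSpace.real_norm_sq_eq]
  exact Finset.sum_sq_le_sq_sum_of_nonneg fun i _ => hx i

lemma continuous_ubar {p : ℕ} (u : Fin p → Polynomial ℝ) : Continuous (ubar u) := by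
  rcases isEmpty_or_nonempty (Fin p) with hp | hp
  · rw [show ubar u = fun _ => 0 from funext fun y => Real.iSup_of_isEmpty _]
    exact continuous_const
  · have h : ubar u = fun y => Finset.univ.sup' Finset.univ_nonempty fun i => (u i).eval y := by
      funext y
      rw [Finset.sup'_univ_eq_ciSup]
      rfl
    rw [h]
    exact Continuous.finset_sup'_apply _ fun i _ => (u i).continuous

lemma continuous_sigma' {p : ℕ} : Continuous (sigma' (p := p)) :=
  continuous_finsetSum _ fun i _ => PiLp.continuous_apply 2 _ i

section StateSpace

variable {p : ℕ} {ρ x : Vec p}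

lemma isClosed_Xs (ρ : Vec p) : IsClosed (Xs ρ) := by
  have h : Xs ρ = ⋂ i, (fun x : Vec p => x i) ⁻¹' Icc 0 (ρ i) := by
    ext x
    simp [Xs]
  rw [h]
  exact isClosed_iInter fun i => isClosed_Icc.preimage (PiLp.continuous_apply 2 _ i)

lemma sub_mem_Xs (hx : x ∈ Xs ρ) : ρ - x ∈ Xs ρ := fun i => by
  have := hx i
  simp only [PiLp.sub_apply, mem_Icc] at this ⊢
  constructor <;> linarith

lemma norm_le_one_of_mem_Xs (hsum : ∑ i, ρ i = 1) (hx : x ∈ Xs ρ) : ‖x‖ ≤ 1 :=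
  calc ‖x‖ ≤ sigma' x := norm_le_sigma' fun i => (hx i).1
    _ ≤ ∑ i, ρ i := Finset.sum_le_sum fun i _ => (hx i).2
    _ = 1 := hsum

end StateSpace

section ImitationDynamics

variable {p : ℕ} (ρ : Vec p) (uA uB : Fin p → Polynomial ℝ)

def dominanceRegion (u v : Fin p → Polynomial ℝ) : Set (Vec p) :=
  {x | x ∈ interior (Xs ρ) ∧ ubar v (sigma' x) < ubar u (sigma' x)}

lemma isOpen_dominanceRegion (u v : Fin p → Polynomial ℝ) : IsOpen (dominanceRegion ρ u v) :=
  isOpen_interior.inter <| isOpen_lt ((continuous_ubar v).comp continuous_sigma')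
    ((continuous_ubar u).comp continuous_sigma')

lemma Vmap_eq_or (x : Vec p) :
    Vmap ρ uA uB x = {ρ - x} ∨ Vmap ρ uA uB x = {-x} ∨
      Vmap ρ uA uB x = segment ℝ (ρ - x) (-x) := by
  unfold Vmap
  split_ifs <;> simp

lemma Vmap_nonempty (x : Vec p) : (Vmap ρ uA uB x).Nonempty := by
  rcases Vmap_eq_or ρ uA uB x with h | h | h <;> rw [h]
  exacts [singleton_nonempty _, singleton_nonempty _, ⟨_, left_mem_segment ℝ _ _⟩]

lemma convex_Vmap (x : Vec p) : Convex ℝ (Vmap ρ uA uB x) := by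
  rcases Vmap_eq_or ρ uA uB x with h | h | h <;> rw [h]
  exacts [convex_singleton _, convex_singleton _, convex_segment _ _]

lemma mem_Vmap_iff {x y : Vec p} :
    y ∈ Vmap ρ uA uB x ↔ y ∈ segment ℝ (ρ - x) (-x) ∧
      (x ∈ dominanceRegion ρ uA uB → y = ρ - x) ∧
      (x ∈ dominanceRegion ρ uB uA → y = -x) := by
  unfold Vmap
  split_ifs with hA hB
  · have hB : x ∉ dominanceRegion ρ uB uA := fun hB => hB.2.not_gt hA.2
    refine ⟨?_, fun h => h.2.1 hA⟩
    rintro rfl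
    exact ⟨left_mem_segment ℝ _ _, fun _ => rfl, fun h => absurd h hB⟩
  · have hA : x ∉ dominanceRegion ρ uA uB := hA
    refine ⟨?_, fun h => h.2.2 hB⟩
    rintro rfl
    exact ⟨right_mem_segment ℝ _ _, fun h => absurd h hA, fun _ => rfl⟩
  · simp [dominanceRegion, hA, hB]

lemma Vmap_subset_closedBall (hsum : ∑ i, ρ i = 1) {x : Vec p} (hx : x ∈ Xs ρ) :
    Vmap ρ uA uB x ⊆ Metric.closedBall 0 1 := by
  refine fun y hy =>
    (convex_closedBall 0 1).segment_subset ?_ ?_ ((mem_Vmap_iff ρ uA uB).1 hy).1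
  · simpa using norm_le_one_of_mem_Xs hsum (sub_mem_Xs hx)
  · simpa using norm_le_one_of_mem_Xs hsum hx

lemma isClosed_graph_Vmap :
    IsClosed {xy : Vec p × Vec p | xy.1 ∈ Xs ρ ∧ xy.2 ∈ Vmap ρ uA uB xy.1} := by
  simp only [mem_Vmap_iff, mem_segment_sub_neg_iff, ofPred_and]
  refine ((isClosed_Xs ρ).preimage continuous_fst).inter <|
    ((isCompact_segment ρ 0).isClosed.preimage (continuous_fst.add continuous_snd)).inter <|
      .inter ?_ ?_
  · exact isClosed_setOf_mem_imp_eq (isOpen_dominanceRegion ρ uA uB) (continuous_sub_left ρ)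
  · exact isClosed_setOf_mem_imp_eq (isOpen_dominanceRegion ρ uB uA) continuous_neg

end ImitationDynamics

theorem Vmap_good_upper_semicontinuous_general
    {p : ℕ} (ρ : Vec p) (hsum : ∑ i, ρ i = 1)
    (uA uB : Fin p → Polynomial ℝ) :
    (∀ x ∈ Xs ρ, (Vmap ρ uA uB x).Nonempty ∧ Convex ℝ (Vmap ρ uA uB x) ∧
      Vmap ρ uA uB x ⊆ Metric.closedBall (0 : Vec p) 2) ∧
    IsClosed {xy : Vec p × Vec p | xy.1 ∈ Xs ρ ∧ xy.2 ∈ Vmap ρ uA uB xy.1} :=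
  ⟨fun x hx => ⟨Vmap_nonempty ρ uA uB x, convex_Vmap ρ uA uB x,
      (Vmap_subset_closedBall ρ uA uB hsum hx).trans
        (Metric.closedBall_subset_closedBall one_le_two)⟩,
    isClosed_graph_Vmap ρ uA uB⟩

theorem Vmap_good_upper_semicontinuous
    {p : ℕ} (hp : 0 < p) (ρ : Vec p) (hρ : ∀ i, 0 < ρ i) (hsum : ∑ i, ρ i = 1)
    (uA uB : Fin p → Polynomial ℝ) :
    (∀ x ∈ Xs ρ, (Vmap ρ uA uB x).Nonempty ∧ Convex ℝ (Vmap ρ uA uB x) ∧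
      Vmap ρ uA uB x ⊆ Metric.closedBall (0 : Vec p) 2) ∧
    IsClosed {xy : Vec p × Vec p | xy.1 ∈ Xs ρ ∧ xy.2 ∈ Vmap ρ uA uB xy.1} :=
  Vmap_good_upper_semicontinuous_general ρ hsum uA uB
end
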